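/- Let k ∈ ℂ, θ₁ ∈ ℂ, and α₁, α₂ ∈ ℂ. Set y = (exp(conj(θ₁)), exp(−conj(θ₁)))ᵀ and ỹ = (conj(α₁)·exp(conj(θ₁)), conj(α₂)·exp(−conj(θ₁)))ᵀ in ℂ², and put r₁ = −Re(θ₁) and ρ = α₂ − α₁. Then the quantity Δ⁺ built from (k, y, ỹ) satisfies Δ⁺ = 4(k²−conj(k)²)²·(1 − kρ)·(1 + conj(k)·conj(ρ)) + 16|k|²·(k·e^{−2r₁} + conj(k)·e^{2r₁})² (the evaluation of Δ⁺ on the one-pole second-order soliton data). -/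

import Mathlib

open Matrix Complex ComplexConjugate

noncomputable section

abbrev M2 := Matrix (Fin 2) (Fin 2) ℂ
abbrev Vec2 := Matrix (Fin 2) (Fin 1) ℂ

def sigma3 : M2 := !![1, 0; 0, -1]
def sigma2 : M2 := !![0, -Complex.I; Complex.I, 0]

/-- ⟨u|M|v⟩ = u†Mv -/
def qform (u : Vec2) (M : M2) (v : Vec2) : ℂ := (uᴴ * M * v) 0 0

def a11 (k : ℂ) (y : Vec2) (ε : ℂ) : ℂ :=
  k * qform y (1 + ε • sigma3) y + conj k * qform y (1 - ε • sigma3) y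

def a12 (k : ℂ) (y yt : Vec2) (ε : ℂ) : ℂ :=
  k * qform y (1 + ε • sigma3) yt + conj k * qform y (1 - ε • sigma3) yt

def a21 (k : ℂ) (y yt : Vec2) (ε : ℂ) : ℂ :=
  k * qform yt (1 + ε • sigma3) y + conj k * qform yt (1 - ε • sigma3) y

def a22 (k : ℂ) (yt : Vec2) (ε : ℂ) : ℂ :=
  k * qform yt (1 + ε • sigma3) yt + conj k * qform yt (1 - ε • sigma3) yt

def b11 (k : ℂ) (y : Vec2) (ε : ℂ) : ℂ :=
  (k ^ 2 + (conj k) ^ 2) * qform y (1 + ε • sigma3) y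
    + 2 * k * conj k * qform y (1 - ε • sigma3) y

def b12 (k : ℂ) (y yt : Vec2) (ε : ℂ) : ℂ :=
  (k ^ 2 + (conj k) ^ 2) * qform y (1 + ε • sigma3) yt
    + 2 * k * conj k * qform y (1 - ε • sigma3) yt

def b21 (k : ℂ) (y yt : Vec2) (ε : ℂ) : ℂ :=
  (k ^ 2 + (conj k) ^ 2) * qform yt (1 + ε • sigma3) y
    + 2 * k * conj k * qform yt (1 - ε • sigma3) y

def c11 (k : ℂ) (y : Vec2) (ε : ℂ) : ℂ :=
  (k ^ 3 + 3 * k * (conj k) ^ 2) * qform y (1 + ε • sigma3) y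
    + ((conj k) ^ 3 + 3 * conj k * k ^ 2) * qform y (1 - ε • sigma3) y

def Δf (k : ℂ) (y yt : Vec2) (ε : ℂ) : ℂ :=
  (k ^ 2 - (conj k) ^ 2) ^ 2
      * (a21 k y yt ε * a12 k y yt ε - a11 k y ε * a22 k yt ε)
    + 2 * a11 k y ε * c11 k y (-ε) - b11 k y ε * b11 k y (-ε)
    + (k ^ 2 - (conj k) ^ 2)
      * (a21 k y yt ε * b11 k y (-ε) - a12 k y yt ε * b11 k y ε
          + a11 k y ε * (b12 k y yt ε - b21 k y yt (-ε)))

/-- P_ε = (I+εσ₃)/2 -/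
def Pe (ε : ℂ) : M2 := (1 / 2 : ℂ) • (1 + ε • sigma3)

/-!
For `ε = 1` the matrix `1 + σ₃` only sees first components and `1 - σ₃` only second ones, so
when `ỹ = diag(β₁, β₂) y` every entry of `Δ⁺` is a polynomial in `k`, `k̄`, the `βᵢ` and
`P = |y₁|²`, `Q = |y₂|²`. Expanding, `Δ⁺ = 4 (k² - k̄²)² P Q (1 - kρ)(1 + k̄ρ̄) + 16 |k|² (kP + k̄Q)²`
with `ρ = β̄₂ - β̄₁`, identically in `P, Q`. On the soliton data `P = e^{-2r₁}` and `Q = e^{2r₁}`,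
so `PQ = 1`.
-/

theorem qform_one_add_smul_sigma3 (u v : Vec2) (ε : ℂ) :
    qform u (1 + ε • sigma3) v
      = (1 + ε) * conj (u 0 0) * v 0 0 + (1 - ε) * conj (u 1 0) * v 1 0 := by
  simp only [qform, sigma3, Matrix.mul_apply, Fin.sum_univ_two, conjTranspose_apply,
    RCLike.star_def, Matrix.add_apply, Matrix.one_apply, smul_of, smul_cons, smul_eq_mul, smul_empty,
    of_apply, cons_val', cons_val_fin_one, cons_val_zero, cons_val_one, Fin.isValue, ↓reduceIte,
    one_ne_zero, zero_ne_one]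
  ring

theorem qform_one_sub_smul_sigma3 (u v : Vec2) (ε : ℂ) :
    qform u (1 - ε • sigma3) v
      = (1 - ε) * conj (u 0 0) * v 0 0 + (1 + ε) * conj (u 1 0) * v 1 0 := by
  rw [sub_eq_add_neg, ← neg_smul, qform_one_add_smul_sigma3]
  ring

theorem Δf_one_componentwise_multiple (k a b β₁ β₂ : ℂ) :
    Δf k !![a; b] !![β₁ * a; β₂ * b] 1
      = 4 * (k ^ 2 - conj k ^ 2) ^ 2 * (normSq a * normSq b : ℝ)
          * (1 - k * (conj β₂ - conj β₁)) * (1 + conj k * (β₂ - β₁))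
        + 16 * (normSq k : ℂ) * (k * normSq a + conj k * normSq b) ^ 2 := by
  simp only [Δf, a11, a12, a21, a22, b11, b12, b21, c11, qform_one_add_smul_sigma3,
    qform_one_sub_smul_sigma3]
  simp only [ofReal_mul, normSq_eq_conj_mul_self, of_apply, cons_val', cons_val_fin_one,
    cons_val_zero, cons_val_one, Fin.isValue, map_mul]
  ring

theorem normSq_exp (z : ℂ) : normSq (exp z) = Real.exp (2 * z.re) := by
  rw [normSq_eq_norm_sq, norm_exp, ← Real.exp_nat_mul]
  push_cast
  rfl

/-- Evaluation of Δ⁺ on the one-pole second-order soliton data. -/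
theorem Delta_plus_soliton (k θ₁ α₁ α₂ : ℂ)
    (y yt : Vec2)
    (hy : y = !![Complex.exp (conj θ₁); Complex.exp (-(conj θ₁))])
    (hyt : yt = !![conj α₁ * Complex.exp (conj θ₁); conj α₂ * Complex.exp (-(conj θ₁))])
    (r₁ : ℝ) (hr : r₁ = -θ₁.re) (ρ : ℂ) (hρ : ρ = α₂ - α₁) :
    Δf k y yt 1
      = 4 * (k ^ 2 - (conj k) ^ 2) ^ 2 * (1 - k * ρ) * (1 + conj k * conj ρ)
        + 16 * (Complex.normSq k : ℂ) *
            (k * Complex.exp (-(2 * (r₁ : ℂ))) + conj k * Complex.exp (2 * (r₁ : ℂ))) ^ 2 := by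
  have hy₀ : normSq (exp (conj θ₁)) = Real.exp (-(2 * r₁)) := by
    rw [normSq_exp, conj_re, hr, mul_neg, neg_neg]
  have hy₁ : normSq (exp (-conj θ₁)) = Real.exp (2 * r₁) := by
    rw [normSq_exp, neg_re, conj_re, hr]
  have hprod : normSq (exp (conj θ₁)) * normSq (exp (-conj θ₁)) = 1 := by
    rw [hy₀, hy₁, ← Real.exp_add, neg_add_cancel, Real.exp_zero]
  subst hy hyt hρ
  rw [Δf_one_componentwise_multiple, hprod, hy₀, hy₁]
  push_cast
  simp only [map_sub, conj_conj]
  ring
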